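/- Let α be badly approximable (bounded partial quotients) and suppose lim_{q→∞, q ∈ D(α)} min{ε(q), θ(q)} = 0, where ε(q) = q·min{‖-t - jα‖ : |j| < q} and θ(q) = q·min{‖1/2 - t - jα‖ : |j| < q}. Then t ∈ ℤα (mod 1) or t ∈ ℤα + 1/2 (mod 1). -/

import Mathlib

/-! Doubling removes the shift `1/2`: since `‖2y‖ ≤ 2‖y‖`, the hypothesis yields, at each
convergent denominator `q = q_k`, some `|j_k| < q` with `q ‖2t + 2j_kα‖ → 0`. Bounded partial
quotients give `‖nα‖ ≥ c / |n|` for `n ≠ 0`, through the best approximation property of the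
convergents and `q_{k+1} ≤ (B + 1) q_k`. Then `d = 2j_k - 2j_{k+1}` satisfies `|d| ≤ 4 q_{k+1}`
and, eventually, `‖dα‖ < c / (4 q_{k+1})`, which forces `d = 0`. So `j_k` is eventually constant,
`2t + 2jα` is an integer, and its parity decides between the two cases. -/

open Set Filter MeasureTheory

/-- Distance from a real number to the nearest integer. -/
noncomputable def nearInt (y : ℝ) : ℝ := |y - round y|

/-- Iterates of the Gauss map starting from `Int.fract α`. -/
noncomputable def gaussIter (α : ℝ) : ℕ → ℝ
  | 0 => Int.fract α
  | n + 1 => Int.fract (gaussIter α n)⁻¹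

/-- `cfAq α k` is the partial quotient `a_{k+1}` of the continued fraction of `α`. -/
noncomputable def cfAq (α : ℝ) (k : ℕ) : ℕ := (⌊(gaussIter α k)⁻¹⌋).toNat

/-- `cfQ α k` is the denominator `q_k` of the `k`-th convergent of `α`. -/
noncomputable def cfQ (α : ℝ) : ℕ → ℕ
  | 0 => 1
  | 1 => cfAq α 0
  | n + 2 => cfAq α (n + 1) * cfQ α (n + 1) + cfQ α n

/-- `cfP α k` is the numerator `p_k` of the `k`-th convergent of `α`. -/
noncomputable def cfP (α : ℝ) : ℕ → ℤ
  | 0 => ⌊α⌋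
  | 1 => cfAq α 0 * ⌊α⌋ + 1
  | n + 2 => cfAq α (n + 1) * cfP α (n + 1) + cfP α n

/-- `ε(q) = q · min{ ‖-t - jα‖ : |j| < q }`. -/
noncomputable def epsQ (α t : ℝ) (q : ℕ) : ℝ :=
  q * sInf {r : ℝ | ∃ j : ℤ, |j| < (q : ℤ) ∧ r = nearInt (-t - (j : ℝ) * α)}

/-- `θ(q) = q · min{ ‖1/2 - t - jα‖ : |j| < q }`. -/
noncomputable def thetaQ (α t : ℝ) (q : ℕ) : ℝ :=
  q * sInf {r : ℝ | ∃ j : ℤ, |j| < (q : ℤ) ∧ r = nearInt (1/2 - t - (j : ℝ) * α)}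

/-- `α` is badly approximable: its continued fraction partial quotients are bounded. -/
def BadlyApprox (α : ℝ) : Prop := ∃ B : ℕ, ∀ k, cfAq α k ≤ B

lemma nearInt_nonneg (y : ℝ) : 0 ≤ nearInt y := abs_nonneg _

lemma nearInt_le_abs_sub (y : ℝ) (m : ℤ) : nearInt y ≤ |y - m| := round_le y m

lemma nearInt_add_intCast (y : ℝ) (m : ℤ) : nearInt (y + m) = nearInt y := by
  rw [nearInt, nearInt, round_add_intCast, Int.cast_add, add_sub_add_right_eq_sub]

lemma nearInt_neg (y : ℝ) : nearInt (-y) = nearInt y := by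
  have key : ∀ z : ℝ, nearInt (-z) ≤ nearInt z := fun z => by
    convert nearInt_le_abs_sub (-z) (-round z) using 1
    rw [nearInt, Int.cast_neg, neg_sub_neg, abs_sub_comm]
  exact le_antisymm (key y) (by simpa using key (-y))

lemma nearInt_sub_le (x y : ℝ) : nearInt (x - y) ≤ nearInt x + nearInt y :=
  calc nearInt (x - y) ≤ |(x - round x) - (y - round y)| := by
        convert nearInt_le_abs_sub (x - y) (round x - round y) using 2; push_cast; ring
    _ ≤ nearInt x + nearInt y := abs_sub _ _

lemma nearInt_two_mul_le (y : ℝ) : nearInt (2 * y) ≤ 2 * nearInt y :=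
  calc nearInt (2 * y) ≤ |2 * y - ((2 * round y : ℤ) : ℝ)| := nearInt_le_abs_sub _ _
    _ = 2 * nearInt y := by rw [nearInt, Int.cast_mul, Int.cast_two, ← mul_sub, abs_mul, abs_two]

lemma exists_intCast_of_nearInt_eq_zero {y : ℝ} (h : nearInt y = 0) : ∃ m : ℤ, y = m :=
  ⟨round y, by rwa [nearInt, abs_eq_zero, sub_eq_zero] at h⟩

lemma gaussIter_nonneg (α : ℝ) (k : ℕ) : 0 ≤ gaussIter α k := by
  cases k <;> exact Int.fract_nonneg _

lemma gaussIter_lt_one (α : ℝ) (k : ℕ) : gaussIter α k < 1 := by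
  cases k <;> exact Int.fract_lt_one _

lemma cfAq_cast_eq_floor (α : ℝ) (k : ℕ) : (cfAq α k : ℝ) = ⌊(gaussIter α k)⁻¹⌋ := by
  have hfloor : 0 ≤ ⌊(gaussIter α k)⁻¹⌋ := Int.floor_nonneg.2 (inv_nonneg.2 (gaussIter_nonneg α k))
  rw [cfAq, ← Int.cast_natCast, Int.toNat_of_nonneg hfloor]

lemma gaussIter_succ_eq (α : ℝ) (k : ℕ) :
    gaussIter α (k + 1) = (gaussIter α k)⁻¹ - cfAq α k := by
  rw [cfAq_cast_eq_floor, Int.self_sub_floor]; rfl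

noncomputable def cfErr (α : ℝ) (k : ℕ) : ℝ := cfQ α k * α - cfP α k

lemma cfErr_zero (α : ℝ) : cfErr α 0 = gaussIter α 0 := by
  simp only [cfErr, cfQ, cfP, gaussIter, ← Int.self_sub_floor, Nat.cast_one, one_mul]

lemma cfErr_add_two (α : ℝ) (k : ℕ) :
    cfErr α (k + 2) = cfAq α (k + 1) * cfErr α (k + 1) + cfErr α k := by
  simp only [cfErr, cfQ, cfP]; push_cast; ring

lemma cfP_succ_mul_cfQ_sub (α : ℝ) (k : ℕ) :
    cfP α (k + 1) * cfQ α k - cfP α k * cfQ α (k + 1) = (-1) ^ k := by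
  induction k with
  | zero => simp only [cfP, cfQ]; push_cast; ring
  | succ k ih =>
    simp only [cfP, cfQ] at ih ⊢
    push_cast
    linear_combination (-1 : ℤ) * ih

lemma cfQ_succ_mul_cfErr_sub (α : ℝ) (k : ℕ) :
    cfQ α (k + 1) * cfErr α k - cfQ α k * cfErr α (k + 1) = (-1) ^ k := by
  have h : ((cfP α (k + 1) * cfQ α k - cfP α k * cfQ α (k + 1) : ℤ) : ℝ) = (-1) ^ k := by
    exact_mod_cast cfP_succ_mul_cfQ_sub α k
  push_cast at h
  simp only [cfErr]
  linear_combination h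

lemma exists_int_comb_cfQ_cfErr (α : ℝ) (k : ℕ) (n p : ℤ) : ∃ u v : ℤ,
    u * cfQ α k + v * cfQ α (k + 1) = n ∧ u * cfErr α k + v * cfErr α (k + 1) = n * α - p := by
  set e : ℤ := (-1) ^ k
  have he : e * e = 1 := by rw [← pow_add, ← two_mul, pow_mul]; norm_num
  have hdet := cfP_succ_mul_cfQ_sub α k
  -- `(u, v)` solves `u q_k + v q_{k+1} = n`, `u p_k + v p_{k+1} = p`, whose determinant is `±1`.
  set u : ℤ := e * (n * cfP α (k + 1) - p * cfQ α (k + 1))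
  set v : ℤ := e * (p * cfQ α k - n * cfP α k)
  have hq : u * cfQ α k + v * cfQ α (k + 1) = n := by linear_combination (e * n) * hdet + n * he
  have hp : u * cfP α k + v * cfP α (k + 1) = p := by linear_combination (e * p) * hdet + p * he
  clear_value u v
  refine ⟨u, v, hq, ?_⟩
  have hqR : (u : ℝ) * cfQ α k + v * cfQ α (k + 1) = n := by exact_mod_cast hq
  have hpR : (u : ℝ) * cfP α k + v * cfP α (k + 1) = p := by exact_mod_cast hp
  simp only [cfErr]
  linear_combination α * hqR - hpR

lemma abs_le_abs_add_of_mul_nonneg {R : Type*} [CommRing R] [LinearOrder R] [IsStrictOrderedRing R]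
    {a b : R} (h : 0 ≤ a * b) : |a| ≤ |a + b| :=
  sq_le_sq.1 (by nlinarith [sq_nonneg b])

lemma ne_zero_and_mul_nonpos_of_add_eq {a b u v n : ℤ} (ha : 0 < a) (hb : 0 < b)
    (h : u * a + v * b = n) (hn : 0 < n) (hnb : n < b) : u ≠ 0 ∧ u * v ≤ 0 := by
  constructor
  · rintro rfl
    rcases le_or_gt v 0 with hv | hv <;> nlinarith
  · rcases le_or_gt u 0 with hu | hu <;> rcases le_or_gt v 0 with hv | hv <;> nlinarith

section Irrational

variable {α : ℝ} (hα : Irrational α)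
include hα

lemma irrational_gaussIter (k : ℕ) : Irrational (gaussIter α k) := by
  induction k with
  | zero => simpa only [gaussIter, ← Int.self_sub_floor] using hα.sub_intCast ⌊α⌋
  | succ k ih => rw [gaussIter_succ_eq]; exact ih.inv.sub_natCast _

lemma gaussIter_pos (k : ℕ) : 0 < gaussIter α k :=
  (gaussIter_nonneg α k).lt_of_ne (irrational_gaussIter hα k).ne_zero.symm

lemma one_le_cfAq (k : ℕ) : 1 ≤ cfAq α k := by
  have hinv : (1 : ℝ) < (gaussIter α k)⁻¹ :=
    (one_lt_inv₀ (gaussIter_pos hα k)).2 (gaussIter_lt_one α k)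
  have h : (1 : ℝ) ≤ cfAq α k := by
    rw [cfAq_cast_eq_floor]; exact_mod_cast Int.le_floor.2 (by exact_mod_cast hinv.le)
  exact_mod_cast h

lemma cfQ_le_cfQ_succ (k : ℕ) : cfQ α k ≤ cfQ α (k + 1) := by
  rcases k with _ | k
  · exact one_le_cfAq hα 0
  · show _ ≤ cfAq α (k + 1) * cfQ α (k + 1) + cfQ α k
    nlinarith [one_le_cfAq hα (k + 1)]

lemma one_le_cfQ (k : ℕ) : 1 ≤ cfQ α k := by
  induction k with
  | zero => exact le_rfl
  | succ k ih => exact ih.trans (cfQ_le_cfQ_succ hα k)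

lemma lt_cfQ_succ (k : ℕ) : k < cfQ α (k + 1) := by
  induction k with
  | zero => exact one_le_cfAq hα 0
  | succ k ih =>
    show _ < cfAq α (k + 1) * cfQ α (k + 1) + cfQ α k
    nlinarith [one_le_cfAq hα (k + 1), one_le_cfQ hα k]

lemma cfQ_succ_le {B : ℕ} (hB : ∀ k, cfAq α k ≤ B) (k : ℕ) :
    cfQ α (k + 1) ≤ (B + 1) * cfQ α k := by
  rcases k with _ | k
  · show cfAq α 0 ≤ (B + 1) * 1
    linarith [hB 0]
  · show cfAq α (k + 1) * cfQ α (k + 1) + cfQ α k ≤ _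
    nlinarith [hB (k + 1), cfQ_le_cfQ_succ hα k]

lemma exists_cfQ_le_lt {n : ℕ} (hn : 1 ≤ n) : ∃ k, cfQ α k ≤ n ∧ n < cfQ α (k + 1) := by
  classical
  have hex : ∃ k, n < cfQ α (k + 1) := ⟨n, lt_cfQ_succ hα n⟩
  refine ⟨Nat.find hex, ?_, Nat.find_spec hex⟩
  rcases h : Nat.find hex with _ | k
  · exact hn
  · exact not_lt.1 (Nat.find_min hex (by omega : k < Nat.find hex))

lemma cfErr_succ (k : ℕ) : cfErr α (k + 1) = -gaussIter α (k + 1) * cfErr α k := by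
  induction k with
  | zero =>
    have hg : gaussIter α 0 ≠ 0 := (gaussIter_pos hα 0).ne'
    rw [cfErr_zero, gaussIter_succ_eq]
    simp only [cfErr, cfQ, cfP, gaussIter, ← Int.self_sub_floor] at hg ⊢
    field_simp
    push_cast
    ring
  | succ k ih =>
    have hg : gaussIter α (k + 1) ≠ 0 := (gaussIter_pos hα (k + 1)).ne'
    rw [cfErr_add_two, ih, gaussIter_succ_eq α (k + 1)]
    field_simp
    ring

lemma cfErr_ne_zero (k : ℕ) : cfErr α k ≠ 0 := by
  induction k with
  | zero => rw [cfErr_zero]; exact (gaussIter_pos hα 0).ne'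
  | succ k ih =>
    rw [cfErr_succ hα]; exact mul_ne_zero (neg_ne_zero.2 (gaussIter_pos hα _).ne') ih

lemma cfErr_mul_cfErr_succ_neg (k : ℕ) : cfErr α k * cfErr α (k + 1) < 0 := by
  rw [cfErr_succ hα]
  nlinarith [gaussIter_pos hα (k + 1), mul_self_pos.2 (cfErr_ne_zero hα k)]

lemma abs_cfErr_succ_le (k : ℕ) : |cfErr α (k + 1)| ≤ |cfErr α k| := by
  rw [cfErr_succ hα, abs_mul, abs_neg, abs_of_pos (gaussIter_pos hα _)]
  exact mul_le_of_le_one_left (abs_nonneg _) (gaussIter_lt_one α _).le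

lemma one_le_cfQ_add_mul_abs_cfErr (k : ℕ) : 1 ≤ (cfQ α k + cfQ α (k + 1)) * |cfErr α k| := by
  have hdet : |(cfQ α (k + 1) : ℝ) * cfErr α k - cfQ α k * cfErr α (k + 1)| = 1 := by
    rw [cfQ_succ_mul_cfErr_sub, abs_pow, abs_neg, abs_one, one_pow]
  calc 1 ≤ cfQ α (k + 1) * |cfErr α k| + cfQ α k * |cfErr α (k + 1)| := by
        rw [← hdet]
        refine (abs_sub _ _).trans_eq ?_
        rw [abs_mul, abs_mul, Nat.abs_cast, Nat.abs_cast]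
    _ ≤ (cfQ α k + cfQ α (k + 1)) * |cfErr α k| := by
        nlinarith [abs_cfErr_succ_le hα k, (Nat.cast_nonneg (cfQ α k) : (0 : ℝ) ≤ _)]

lemma abs_cfErr_le (k : ℕ) {n p : ℤ} (hn : 0 < n) (hnq : n < cfQ α (k + 1)) :
    |cfErr α k| ≤ |n * α - p| := by
  obtain ⟨u, v, hq, hp⟩ := exists_int_comb_cfQ_cfErr α k n p
  have hqk : (0 : ℤ) < cfQ α k := by exact_mod_cast one_le_cfQ hα k
  have hqk' : (0 : ℤ) < cfQ α (k + 1) := by exact_mod_cast one_le_cfQ hα (k + 1)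
  obtain ⟨hu, huv⟩ := ne_zero_and_mul_nonpos_of_add_eq hqk hqk' hq hn hnq
  have huvR : ((u * v : ℤ) : ℝ) ≤ 0 := by exact_mod_cast huv
  have hsame : 0 ≤ (u * cfErr α k) * (v * cfErr α (k + 1)) := by
    push_cast at huvR
    nlinarith [cfErr_mul_cfErr_succ_neg hα k]
  have hu1 : (1 : ℝ) ≤ |(u : ℝ)| := by exact_mod_cast Int.one_le_abs hu
  calc |cfErr α k| ≤ |(u : ℝ)| * |cfErr α k| := le_mul_of_one_le_left (abs_nonneg _) hu1
    _ = |u * cfErr α k| := (abs_mul _ _).symm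
    _ ≤ |u * cfErr α k + v * cfErr α (k + 1)| := abs_le_abs_add_of_mul_nonneg hsame
    _ = |n * α - p| := by rw [hp]

lemma one_div_le_nearInt_natCast_mul {B : ℕ} (hB : ∀ k, cfAq α k ≤ B) {n : ℕ} (hn : 1 ≤ n) :
    1 / ((B + 2) * n) ≤ nearInt (n * α) := by
  obtain ⟨k, hqn, hnq⟩ := exists_cfQ_le_lt hα hn
  have hbest : |cfErr α k| ≤ nearInt (n * α) := by
    simpa [nearInt] using abs_cfErr_le hα k (n := n) (p := round ((n : ℝ) * α))
      (by exact_mod_cast hn) (by exact_mod_cast hnq)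
  have hqR : (cfQ α k : ℝ) ≤ n := by exact_mod_cast hqn
  have hsucc : (cfQ α (k + 1) : ℝ) ≤ (B + 1) * cfQ α k := by exact_mod_cast cfQ_succ_le hα hB k
  have hsum : (cfQ α k + cfQ α (k + 1) : ℝ) ≤ (B + 2) * n := by nlinarith
  rw [div_le_iff₀' (by positivity)]
  calc 1 ≤ (cfQ α k + cfQ α (k + 1)) * |cfErr α k| := one_le_cfQ_add_mul_abs_cfErr hα k
    _ ≤ (B + 2) * n * nearInt (n * α) := mul_le_mul hsum hbest (abs_nonneg _) (by positivity)

end Irrational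

lemma BadlyApprox.exists_pos_div_abs_le_nearInt_mul {α : ℝ} (hbad : BadlyApprox α)
    (hα : Irrational α) : ∃ c > 0, ∀ n : ℤ, n ≠ 0 → c / |(n : ℝ)| ≤ nearInt (n * α) := by
  obtain ⟨B, hB⟩ := hbad
  refine ⟨1 / (B + 2), by positivity, fun n hn => ?_⟩
  obtain ⟨m, rfl | rfl⟩ := Int.eq_nat_or_neg n <;>
  · have hm : 1 ≤ m := by omega
    simp only [Int.cast_natCast, Int.cast_neg, abs_neg, Nat.abs_cast, neg_mul, nearInt_neg, div_div]
    exact one_div_le_nearInt_natCast_mul hα hB hm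

section Rigidity

variable {α c : ℝ} (hlow : ∀ n : ℤ, n ≠ 0 → c / |(n : ℝ)| ≤ nearInt (n * α))
include hlow

lemma eq_zero_of_nearInt_mul_lt (hc : 0 ≤ c) {n : ℤ} {Q : ℝ} (hnQ : |(n : ℝ)| ≤ Q)
    (hlt : nearInt (n * α) < c / Q) : n = 0 := by
  by_contra hn
  have hpos : 0 < |(n : ℝ)| := abs_pos.2 (Int.cast_ne_zero.2 hn)
  exact (hlt.trans_le (div_le_div_of_nonneg_left hc hpos hnQ)).not_ge (hlow n hn)

theorem exists_nearInt_eq_zero_of_tendsto (hc : 0 < c) {q : ℕ → ℝ} {M : ℝ} (hq : ∀ k, 1 ≤ q k)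
    (hmono : ∀ k, q k ≤ q (k + 1)) (hM : ∀ k, q (k + 1) ≤ M * q k) {x : ℝ} {n : ℕ → ℤ}
    (hn : ∀ k, |(n k : ℝ)| ≤ 2 * q k)
    (hlim : Tendsto (fun k => q k * nearInt (x + n k * α)) atTop (nhds 0)) :
    ∃ k, nearInt (x + n k * α) = 0 := by
  have hM1 : 0 < M + 1 := by nlinarith [hM 0, hq 0, hq 1]
  set η := c / (4 * (M + 1))
  obtain ⟨K, hK⟩ := eventually_atTop.1 (hlim.eventually (gt_mem_nhds (by positivity : 0 < η)))
  have hstep : ∀ k, K ≤ k → n (k + 1) = n k := by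
    intro k hk
    have hq0 := hq k
    have hq1 := hq (k + 1)
    have hsmall : ∀ i, K ≤ i → nearInt (x + n i * α) < η / q i := fun i hi =>
      (lt_div_iff₀' (by linarith [hq i])).2 (hK i hi)
    have hratio : η / q k ≤ M * η / q (k + 1) := by
      rw [div_le_div_iff₀ (by linarith) (by linarith)]
      nlinarith [hM k, (by positivity : 0 < η)]
    have hdist : nearInt ((n k - n (k + 1) : ℤ) * α) < c / (4 * q (k + 1)) :=
      calc nearInt ((n k - n (k + 1) : ℤ) * α)
          ≤ nearInt (x + n k * α) + nearInt (x + n (k + 1) * α) := by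
            convert nearInt_sub_le (x + n k * α) (x + n (k + 1) * α) using 2; push_cast; ring
        _ < η / q k + η / q (k + 1) := add_lt_add (hsmall k hk) (hsmall (k + 1) (by omega))
        _ ≤ M * η / q (k + 1) + η / q (k + 1) := by gcongr
        _ = c / (4 * q (k + 1)) := by simp only [η]; field_simp
    have hbound : |((n k - n (k + 1) : ℤ) : ℝ)| ≤ 4 * q (k + 1) := by
      push_cast
      linarith [abs_sub (n k : ℝ) (n (k + 1)), hn k, hn (k + 1), hmono k]
    have := eq_zero_of_nearInt_mul_lt hlow hc.le hbound hdist
    omega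
  have hconst : ∀ k, K ≤ k → n k = n K := fun k hk => by
    induction k, hk using Nat.le_induction with
    | base => rfl
    | succ k hk ih => exact (hstep k hk).trans ih
  refine ⟨K, le_antisymm (ge_of_tendsto hlim (eventually_atTop.2 ⟨K, fun k hk => ?_⟩))
    (nearInt_nonneg _)⟩
  rw [hconst k hk]
  exact le_mul_of_one_le_left (nearInt_nonneg _) (hq k)

end Rigidity

lemma exists_sInf_eq_of_abs_lt (f : ℤ → ℝ) {q : ℕ} (hq : 0 < q) :
    ∃ j : ℤ, |j| < q ∧ sInf {r : ℝ | ∃ j : ℤ, |j| < (q : ℤ) ∧ r = f j} = f j := by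
  have hfin : {r : ℝ | ∃ j : ℤ, |j| < (q : ℤ) ∧ r = f j}.Finite := by
    refine ((Set.finite_Ioo (-(q : ℤ)) q).image f).subset ?_
    rintro _ ⟨j, hj, rfl⟩
    exact ⟨j, abs_lt.1 hj, rfl⟩
  have hne : {r : ℝ | ∃ j : ℤ, |j| < (q : ℤ) ∧ r = f j}.Nonempty :=
    ⟨f 0, 0, by simpa using hq, rfl⟩
  obtain ⟨j, hj, hmin⟩ := hne.csInf_mem hfin
  exact ⟨j, hj, hmin⟩

lemma exists_mul_nearInt_le_epsQ (α t : ℝ) {q : ℕ} (hq : 0 < q) :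
    ∃ j : ℤ, |j| < q ∧ q * nearInt (2 * t + (2 * j : ℤ) * α) ≤ 2 * epsQ α t q := by
  obtain ⟨j, hj, hmin⟩ := exists_sInf_eq_of_abs_lt (fun j : ℤ => nearInt (-t - j * α)) hq
  refine ⟨j, hj, ?_⟩
  have h : nearInt (2 * t + (2 * j : ℤ) * α) = nearInt (2 * (-t - j * α)) := by
    rw [← nearInt_neg]; push_cast; ring_nf
  rw [epsQ, hmin, h]
  nlinarith [nearInt_two_mul_le (-t - j * α), (Nat.cast_nonneg q : (0 : ℝ) ≤ q)]

lemma exists_mul_nearInt_le_thetaQ (α t : ℝ) {q : ℕ} (hq : 0 < q) :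
    ∃ j : ℤ, |j| < q ∧ q * nearInt (2 * t + (2 * j : ℤ) * α) ≤ 2 * thetaQ α t q := by
  obtain ⟨j, hj, hmin⟩ := exists_sInf_eq_of_abs_lt (fun j : ℤ => nearInt (1 / 2 - t - j * α)) hq
  refine ⟨j, hj, ?_⟩
  have h : nearInt (2 * t + (2 * j : ℤ) * α) = nearInt (2 * (1 / 2 - t - j * α)) := by
    rw [← nearInt_neg, ← nearInt_add_intCast _ 1]; push_cast; ring_nf
  rw [thetaQ, hmin, h]
  nlinarith [nearInt_two_mul_le (1 / 2 - t - j * α), (Nat.cast_nonneg q : (0 : ℝ) ≤ q)]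

lemma exists_mul_nearInt_le_min (α t : ℝ) {q : ℕ} (hq : 0 < q) : ∃ j : ℤ, |j| < q ∧
    q * nearInt (2 * t + (2 * j : ℤ) * α) ≤ 2 * min (epsQ α t q) (thetaQ α t q) := by
  rcases min_choice (epsQ α t q) (thetaQ α t q) with h | h <;> rw [h]
  · exact exists_mul_nearInt_le_epsQ α t hq
  · exact exists_mul_nearInt_le_thetaQ α t hq

theorem stmt16_general (α : ℝ) (hα : Irrational α)
    (hbad : BadlyApprox α) (t : ℝ)
    (hlim : Filter.Tendsto (fun k : ℕ => min (epsQ α t (cfQ α k)) (thetaQ α t (cfQ α k)))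
      Filter.atTop (nhds 0)) :
    (∃ n m : ℤ, t = (n : ℝ) * α + m) ∨ (∃ n m : ℤ, t = (n : ℝ) * α + 1/2 + m) := by
  obtain ⟨c, hc, hlow⟩ := hbad.exists_pos_div_abs_le_nearInt_mul hα
  obtain ⟨B, hB⟩ := hbad
  choose j hj hjle using fun k => exists_mul_nearInt_le_min α t (one_le_cfQ hα k)
  have hlim' : Tendsto (fun k => (cfQ α k : ℝ) * nearInt (2 * t + (2 * j k : ℤ) * α))
      atTop (nhds 0) :=
    squeeze_zero (fun k => mul_nonneg (Nat.cast_nonneg _) (nearInt_nonneg _)) hjle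
      (by simpa using hlim.const_mul 2)
  have hjq : ∀ k, |((2 * j k : ℤ) : ℝ)| ≤ 2 * cfQ α k := fun k => by
    have : |2 * j k| ≤ 2 * (cfQ α k : ℤ) := by rw [abs_mul, abs_two]; linarith [hj k]
    exact_mod_cast this
  obtain ⟨k, hk⟩ := exists_nearInt_eq_zero_of_tendsto hlow hc (M := B + 1)
    (fun k => by exact_mod_cast one_le_cfQ hα k) (fun k => by exact_mod_cast cfQ_le_cfQ_succ hα k)
    (fun k => by exact_mod_cast cfQ_succ_le hα hB k) hjq hlim'
  obtain ⟨m, hm⟩ := exists_intCast_of_nearInt_eq_zero hk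
  push_cast at hm
  obtain ⟨m, rfl | rfl⟩ := Int.even_or_odd' m
  · exact Or.inl ⟨-j k, m, by push_cast at hm ⊢; linarith⟩
  · exact Or.inr ⟨-j k, m, by push_cast at hm ⊢; linarith⟩

/-- If `α` is badly approximable and `min{ε(q), θ(q)} → 0` along the convergent
denominators of `α`, then `t ∈ ℤα (mod 1)` or `t ∈ ℤα + 1/2 (mod 1)`. -/
theorem stmt16 (α : ℝ) (hα : Irrational α) (hα0 : 0 < α) (hα1 : α < 1)
    (hbad : BadlyApprox α) (t : ℝ) (ht : t ∈ Set.Ico (0:ℝ) 1)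
    (hlim : Filter.Tendsto (fun k : ℕ => min (epsQ α t (cfQ α k)) (thetaQ α t (cfQ α k)))
      Filter.atTop (nhds 0)) :
    (∃ n m : ℤ, t = (n : ℝ) * α + m) ∨ (∃ n m : ℤ, t = (n : ℝ) * α + 1/2 + m) :=
  stmt16_general α hα hbad t hlim
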